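/- arXiv:1310.8156 — 2 statements merged into one kernel-verified Lean document; each statement's English description precedes it below -/
import Mathlib

section
/- Let G = ⟨N_R, Σ, θ, P⟩ be a totally rigid tree grammar and β ∈ N_R with β ≠ θ such that P contains exactly one production with left-hand side β, say β → t. Let G' be the grammar obtained by removing β from the non-terminals, deleting the production β → t, and substituting t for β in the right-hand sides of all remaining productions. Then L(G) = L(G'). -/
/-- Terms (trees) over a ranked alphabet `F` and non-terminals `N`. -/
inductive Tm (F N : Type) : Type
  | func : F → List (Tm F N) → Tm F N
  | nt : N → Tm F N

namespace Tm

variable {F N N' : Type}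

/-- The subterm of a term at a position (a list of natural numbers), if it exists. -/
def at? : Tm F N → List Nat → Option (Tm F N)
  | t, [] => some t
  | nt _, _ :: _ => none
  | func _ args, i :: p =>
      match args[i]? with
      | some a => a.at? p
      | none => none
  termination_by t p => p.length

/-- The non-terminal `β` occurs at position `p` in a term. -/
inductive OccursAt (β : N) : Tm F N → List Nat → Prop
  | here : OccursAt β (nt β) []
  | there {f : F} {args : List (Tm F N)} {i : Nat} {a : Tm F N} {p : List Nat} :
      args[i]? = some a → OccursAt β a p → OccursAt β (func f args) (i :: p)

/-- The non-terminal `β` occurs in the term `t`. -/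
def Occurs (β : N) (t : Tm F N) : Prop := ∃ p, OccursAt β t p

/-- A term is ground if it contains no non-terminals. -/
inductive IsGround : Tm F N → Prop
  | func {f : F} {args : List (Tm F N)} : (∀ a ∈ args, IsGround a) → IsGround (func f args)

/-- Substitution of the term `s` for the non-terminal `β`. -/
def subst [DecidableEq N] (β : N) (s : Tm F N) : Tm F N → Tm F N
  | nt γ => if γ = β then s else nt γ
  | func f args => func f (args.attach.map fun a => subst β s a.1)
  decreasing_by all_goals (simp only [Tm.func.sizeOf_spec]; have := List.sizeOf_lt_of_mem a.2; omega)

/-- Renaming of non-terminals. -/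
def mapNT (σ : N → N') : Tm F N → Tm F N'
  | nt γ => nt (σ γ)
  | func f args => func f (args.attach.map fun a => mapNT σ a.1)
  decreasing_by all_goals (simp only [Tm.func.sizeOf_spec]; have := List.sizeOf_lt_of_mem a.2; omega)

/-- The size (number of symbol occurrences) of a term. -/
def size : Tm F N → Nat
  | nt _ => 1
  | func _ args => 1 + (args.attach.map fun a => size a.1).sum
  decreasing_by all_goals (simp only [Tm.func.sizeOf_spec]; have := List.sizeOf_lt_of_mem a.2; omega)

end Tm

/-- One rewrite step using the single production `pr`: replace one occurrence of the
    left-hand side non-terminal by the right-hand side. -/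
inductive ProdStep {F N : Type} : (N × Tm F N) → Tm F N → Tm F N → Prop
  | here {β : N} {t : Tm F N} : ProdStep (β, t) (Tm.nt β) t
  | inArg {pr : N × Tm F N} {f : F} {args : List (Tm F N)} {i : Nat} {a b : Tm F N} :
      args[i]? = some a → ProdStep pr a b → ProdStep pr (Tm.func f args) (Tm.func f (args.set i b))

/-- A rigid tree grammar: a set of rigid non-terminals, a start symbol and a set of
    productions.  (Taking `rigid = ∅` gives a plain regular tree grammar;
    `rigid = Set.univ` a totally rigid one.) -/
structure RTG (F N : Type) where
  rigid : Set N
  start : N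
  prods : Set (N × Tm F N)

/-- A derivation of the term `t` in the grammar `G`: a sequence of terms starting with the
    start symbol and ending with `t`, each step rewriting by a production of `G`
    (the list `prs` records which production is used at each step). -/
structure Deriv {F N : Type} (G : RTG F N) (t : Tm F N) where
  prs : List (N × Tm F N)
  seq : List (Tm F N)
  len : seq.length = prs.length + 1
  head : seq.head? = some (Tm.nt G.start)
  last : seq.getLast? = some t
  mem : ∀ pr ∈ prs, pr ∈ G.prods
  steps : ∀ (i : Nat) (a b : Tm F N) (pr : N × Tm F N),
      seq[i]? = some a → seq[i + 1]? = some b → prs[i]? = some pr → ProdStep pr a b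

namespace Deriv

variable {F N : Type} {G : RTG F N} {t : Tm F N}

/-- `p` is a `β`-position of the derivation `D`. -/
def IsPos (D : Deriv G t) (β : N) (p : List Nat) : Prop :=
  ∃ s ∈ D.seq, Tm.OccursAt β s p

/-- The rigidity condition: all positions at which a rigid non-terminal occurs during the
    derivation carry equal subterms of the final term. -/
def Rigid (D : Deriv G t) : Prop :=
  ∀ β ∈ G.rigid, ∀ p q, D.IsPos β p → D.IsPos β q → t.at? p = t.at? q

end Deriv

/-- The language of a rigid tree grammar: ground terms derivable from the start symbol by a
    derivation satisfying the rigidity condition. -/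
def RTG.Lang {F N : Type} (G : RTG F N) : Set (Tm F N) :=
  { t | t.IsGround ∧ ∃ D : Deriv G t, D.Rigid }

/-- The language of the underlying regular tree grammar (no rigidity condition). -/
def RTG.RegLang {F N : Type} (G : RTG F N) : Set (Tm F N) :=
  { t | t.IsGround ∧ Nonempty (Deriv G t) }

/-- One-step reachability between non-terminals: `α →_P β` iff some production `α → t` in `P`
    has `β` occurring in `t`. -/
def Reach {F N : Type} (P : Set (N × Tm F N)) (α β : N) : Prop :=
  ∃ t, (α, t) ∈ P ∧ Tm.Occurs β t

/-- A set of productions is acyclic if the transitive closure of `→_P` is irreflexive. -/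
def Acyclic {F N : Type} (P : Set (N × Tm F N)) : Prop :=
  ∀ α, ¬ Relation.TransGen (Reach P) α α

/-! Write `G'` for `G.inline β t`. Substituting `t` for `β` maps a `G`-derivation to a
`G'`-derivation: a step with `γ → u`, `γ ≠ β`, becomes a step with `γ → u[t/β]`, and a step with
`β → t` becomes trivial. Conversely, a `G'`-step with `γ → u[t/β]` is simulated in `G` by `γ → u`
followed by expanding each new `β` with `β → t`. Both translations need `β ∉ t`. If `β ∈ t`,
then no sentential form of a derivation of a ground term contains `β`, since `β` is never removed
once present; so a `G`-derivation never uses `β → t`, and a `G'`-derivation only uses `β`-free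
`u`, for which `u[t/β] = u`.

Rigidity survives in both directions. Every occurrence of a non-terminal in the image of a
`G`-derivation is already an occurrence in the derivation itself, because a `β` at position `p`
is eventually rewritten, necessarily to `t`, at `p`. Conversely, the new `β`-positions of the
simulating `G`-derivation carry `t` in sentential forms of the rigid `G'`-derivation. In a rigid
derivation two occurrences of the same subterm yield equal subterms of the final term: these
agree at the non-terminal leaves by rigidity, and elsewhere have the function symbols that they
inherit from the common subterm. -/

open Relation

theorem Relation.ReflTransGen.and_of_backward {α : Type*} {r : α → α → Prop} {p : α → Prop}
    {a b : α} (h : ReflTransGen r a b) (hp : ∀ x y, r x y → p y → p x) (hb : p b) :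
    p a ∧ ReflTransGen (fun x y => r x y ∧ p y) a b := by
  induction h using ReflTransGen.head_induction_on with
  | refl => exact ⟨hb, .refl⟩
  | head hac _ ih => exact ⟨hp _ _ hac ih.1, .head ⟨hac, ih.1⟩ ih.2⟩

namespace Tm

variable {F N : Type}

@[elab_as_elim]
theorem rec_mem {motive : Tm F N → Prop} (nt : ∀ γ, motive (nt γ))
    (func : ∀ f l, (∀ a ∈ l, motive a) → motive (func f l)) : ∀ s, motive s
  | .nt γ => nt γ
  | .func f l => func f l fun a _ => rec_mem nt func a

@[simp]
theorem at?_nil (s : Tm F N) : s.at? [] = some s := by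
  rw [at?]

@[simp]
theorem at?_nt_cons (γ : N) (i : ℕ) (p : List ℕ) : (nt γ : Tm F N).at? (i :: p) = none := by
  rw [at?]

@[simp]
theorem at?_func_cons (f : F) (l : List (Tm F N)) (i : ℕ) (p : List ℕ) :
    (func f l).at? (i :: p) = l[i]?.bind (·.at? p) := by
  rw [at?]
  cases l[i]? <;> rfl

theorem at?_append (s : Tm F N) (p q : List ℕ) : s.at? (p ++ q) = (s.at? p).bind (·.at? q) := by
  induction p generalizing s with
  | nil => simp
  | cons i p ih =>
    cases s with
    | nt γ => simp
    | func f l => simp [ih, Option.bind_assoc]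

theorem at?_append_of_at?_eq {s w : Tm F N} {p : List ℕ} (h : s.at? p = some w) (q : List ℕ) :
    s.at? (p ++ q) = w.at? q := by
  rw [at?_append, h, Option.bind_some]

theorem occursAt_iff {γ : N} {s : Tm F N} {p : List ℕ} :
    OccursAt γ s p ↔ s.at? p = some (nt γ) := by
  induction p generalizing s with
  | nil =>
    simp only [at?_nil, Option.some.injEq]
    constructor
    · rintro ⟨⟩
      rfl
    · rintro rfl
      exact .here
  | cons i p ih =>
    cases s with
    | nt δ => simp only [at?_nt_cons, reduceCtorEq, iff_false]; rintro ⟨⟩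
    | func f l =>
      simp only [at?_func_cons, Option.bind_eq_some_iff]
      constructor
      · intro h
        cases h with
        | there hi h => exact ⟨_, hi, ih.1 h⟩
      · rintro ⟨a, hi, h⟩
        exact .there hi (ih.2 h)

theorem occursAt_append_iff {γ : N} {s w : Tm F N} {p r : List ℕ} (h : s.at? p = some w) :
    OccursAt γ s (p ++ r) ↔ OccursAt γ w r := by
  simp only [occursAt_iff, at?_append_of_at?_eq h]

theorem Occurs.of_at?_eq {γ : N} {s w : Tm F N} {p : List ℕ} (h : s.at? p = some w)
    (hw : Occurs γ w) : Occurs γ s :=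
  let ⟨r, hr⟩ := hw
  ⟨p ++ r, (occursAt_append_iff h).2 hr⟩

theorem IsGround.not_occurs {γ : N} {s : Tm F N} (hs : s.IsGround) : ¬ Occurs γ s := by
  rintro ⟨p, h⟩
  induction h with
  | here => cases hs
  | there hi _ ih =>
    cases hs with
    | func hall => exact ih (hall _ (List.mem_of_getElem? hi))

def HasFuncAt (s : Tm F N) (p : List ℕ) (f : F) (n : ℕ) : Prop :=
  ∃ l, s.at? p = some (func f l) ∧ l.length = n

theorem hasFuncAt_append_iff {s w : Tm F N} {p r : List ℕ} {f : F} {n : ℕ}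
    (h : s.at? p = some w) : s.HasFuncAt (p ++ r) f n ↔ w.HasFuncAt r f n := by
  simp only [HasFuncAt, at?_append_of_at?_eq h]

theorem at?_eq_at?_of_hasFuncAt {v₁ v₂ : Tm F N} (w : Tm F N) {p q : List ℕ}
    (h₁ : ∀ r f n, w.HasFuncAt r f n → v₁.HasFuncAt (p ++ r) f n)
    (h₂ : ∀ r f n, w.HasFuncAt r f n → v₂.HasFuncAt (q ++ r) f n)
    (hnt : ∀ r γ, OccursAt γ w r → v₁.at? (p ++ r) = v₂.at? (q ++ r)) :
    v₁.at? p = v₂.at? q := by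
  induction w using Tm.rec_mem generalizing p q with
  | nt γ => simpa using hnt [] γ .here
  | func f l ih =>
    obtain ⟨l₁, hp₁, hlen₁⟩ := h₁ [] f l.length ⟨l, at?_nil _, rfl⟩
    obtain ⟨l₂, hq₂, hlen₂⟩ := h₂ [] f l.length ⟨l, at?_nil _, rfl⟩
    rw [List.append_nil] at hp₁ hq₂
    rw [hp₁, hq₂, Option.some_inj, func.injEq, List.ext_getElem?_iff]
    refine ⟨rfl, fun i => ?_⟩
    cases hi : l[i]? with
    | none =>
      rw [List.getElem?_eq_none_iff] at hi
      rw [List.getElem?_eq_none (by omega), List.getElem?_eq_none (by omega)]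
    | some a =>
      have hchild : (func f l).at? [i] = some a := by simp [hi]
      have key := ih a (List.mem_of_getElem? hi) (p := p ++ [i]) (q := q ++ [i])
        (fun r g n h => by simpa using h₁ _ g n ((hasFuncAt_append_iff hchild).2 h))
        (fun r g n h => by simpa using h₂ _ g n ((hasFuncAt_append_iff hchild).2 h))
        (fun r γ h => by simpa using hnt _ γ ((occursAt_append_iff hchild).2 h))
      simpa [at?_append_of_at?_eq hp₁, at?_append_of_at?_eq hq₂] using key

section Subst

variable [DecidableEq N] {β : N} {t : Tm F N}

@[simp]
theorem subst_nt (γ : N) : subst β t (nt γ) = if γ = β then t else nt γ := by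
  rw [subst]

@[simp]
theorem subst_func (f : F) (l : List (Tm F N)) :
    subst β t (func f l) = func f (l.map (subst β t)) := by
  rw [subst, List.attach_map_val]

theorem subst_eq_self {s : Tm F N} (h : ¬ Occurs β s) : subst β t s = s := by
  induction s using rec_mem with
  | nt γ =>
    have : γ ≠ β := by rintro rfl; exact h ⟨[], .here⟩
    simp [this]
  | func f l ih =>
    rw [subst_func, List.map_congr_left (g := id), List.map_id]
    intro a ha
    obtain ⟨i, hi⟩ := List.getElem?_of_mem ha
    exact ih a ha fun hocc => h (hocc.of_at?_eq (p := [i]) (by simp [hi]))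

theorem at?_subst {s w : Tm F N} {p : List ℕ} (h : s.at? p = some w) :
    (subst β t s).at? p = some (subst β t w) := by
  induction p generalizing s with
  | nil => simp_all
  | cons i p ih =>
    cases s with
    | nt γ => simp at h
    | func f l =>
      obtain ⟨a, hi, ha⟩ := Option.bind_eq_some_iff.1 (at?_func_cons f l i p ▸ h)
      simp [hi, ih ha]

theorem occursAt_subst_iff {γ : N} {s : Tm F N} {p : List ℕ} :
    OccursAt γ (subst β t s) p ↔
      (γ ≠ β ∧ OccursAt γ s p) ∨ ∃ p₀ r, p = p₀ ++ r ∧ OccursAt β s p₀ ∧ OccursAt γ t r := by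
  constructor
  · intro h
    induction s using rec_mem generalizing p with
    | nt δ =>
      by_cases hδ : δ = β
      · subst hδ
        exact .inr ⟨[], p, rfl, .here, by simpa using h⟩
      · rw [subst_nt, if_neg hδ] at h
        cases h
        exact .inl ⟨hδ, .here⟩
    | func f l ih =>
      rw [subst_func] at h
      cases h with
      | there hmap h =>
        obtain ⟨a, hi, rfl⟩ := Option.map_eq_some_iff.1 (List.getElem?_map ▸ hmap)
        rcases ih a (List.mem_of_getElem? hi) h with ⟨hγ, h⟩ | ⟨p₀, r, rfl, h₀, hr⟩
        · exact .inl ⟨hγ, .there hi h⟩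
        · exact .inr ⟨_ :: p₀, r, rfl, .there hi h₀, hr⟩
  · rintro (⟨hγ, h⟩ | ⟨p₀, r, rfl, h₀, hr⟩)
    · simpa [occursAt_iff, hγ] using at?_subst (β := β) (t := t) (occursAt_iff.1 h)
    · have h₀ := at?_subst (β := β) (t := t) (occursAt_iff.1 h₀)
      rw [subst_nt, if_pos rfl] at h₀
      exact (occursAt_append_iff h₀).2 hr

end Subst

end Tm

namespace ProdStep

open Tm

variable {F N : Type} {pr : N × Tm F N} {x y : Tm F N}

theorem exists_occursAt (h : ProdStep pr x y) : ∃ p, OccursAt pr.1 x p ∧ y.at? p = some pr.2 := by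
  induction h with
  | here => exact ⟨[], .here, at?_nil _⟩
  | @inArg pr f args i a b hi _ ih =>
    obtain ⟨p, hp, hb⟩ := ih
    have hlt := (List.getElem?_eq_some_iff.1 hi).1
    exact ⟨i :: p, .there hi hp, by simp [hlt, hb]⟩

theorem occursAt_or {γ : N} {p : List ℕ} (h : ProdStep pr x y) (hx : OccursAt γ x p) :
    OccursAt γ y p ∨ pr.1 = γ ∧ y.at? p = some pr.2 := by
  induction h generalizing p with
  | here =>
    cases hx
    exact .inr ⟨rfl, at?_nil _⟩
  | @inArg pr f args i a b hi _ ih =>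
    cases hx with
    | @there _ _ j c q hj hq =>
      have hlt := (List.getElem?_eq_some_iff.1 hi).1
      by_cases hji : i = j
      · subst hji
        obtain rfl : c = a := Option.some.inj (hj.symm.trans hi)
        rcases ih hq with h | ⟨h₁, h₂⟩
        · exact .inl (.there (List.getElem?_set_self hlt) h)
        · exact .inr ⟨h₁, by simp [hlt, h₂]⟩
      · exact .inl (.there (by rwa [List.getElem?_set_ne hji]) hq)

theorem hasFuncAt {p : List ℕ} {f : F} {n : ℕ} (h : ProdStep pr x y) (hx : x.HasFuncAt p f n) :
    y.HasFuncAt p f n := by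
  induction h generalizing p with
  | here =>
    obtain ⟨l, hl, -⟩ := hx
    cases p <;> simp at hl
  | @inArg pr g args i a b hi _ ih =>
    have hlt := (List.getElem?_eq_some_iff.1 hi).1
    obtain ⟨l, hl, rfl⟩ := hx
    cases p with
    | nil =>
      obtain ⟨rfl, rfl⟩ : g = f ∧ args = l := by simpa using hl
      exact ⟨_, at?_nil _, List.length_set⟩
    | cons j q =>
      by_cases hji : i = j
      · subst hji
        simp only [at?_func_cons, hi, Option.bind_some] at hl
        obtain ⟨l', hl', hlen⟩ := ih ⟨l, hl, rfl⟩
        exact ⟨l', by simp [hlt, hl'], hlen⟩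
      · exact ⟨l, by simpa [List.getElem?_set_ne hji] using hl, rfl⟩

section Subst

variable [DecidableEq N] {β γ : N} {t u : Tm F N}

protected theorem subst (hγ : γ ≠ β) (h : ProdStep (γ, u) x y) :
    ProdStep (γ, subst β t u) (subst β t x) (subst β t y) := by
  generalize hpr : (γ, u) = pr at h
  induction h with
  | here =>
    cases hpr
    simpa [hγ] using ProdStep.here
  | inArg hi _ ih =>
    subst hpr
    rw [subst_func, subst_func, List.map_set]
    exact .inArg (by simp [hi]) (ih rfl)

theorem subst_eq_subst (ht : ¬ Occurs β t) (h : ProdStep (β, t) x y) :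
    subst β t x = subst β t y := by
  generalize hpr : (β, t) = pr at h
  induction h with
  | here =>
    cases hpr
    simp [subst_eq_self ht]
  | @inArg pr f args i a b hi _ ih =>
    subst hpr
    obtain ⟨hlt, rfl⟩ := List.getElem?_eq_some_iff.1 hi
    rw [subst_func, subst_func, List.map_set, ← ih rfl, ← List.getElem_map (subst β t),
      List.set_getElem_self]
    simpa using hlt

end Subst

theorem reflTransGen_func_set {f : F} {l : List (Tm F N)} {i : ℕ} {a b : Tm F N}
    (hi : i < l.length) (h : ReflTransGen (ProdStep pr) a b) :
    ReflTransGen (ProdStep pr) (func f (l.set i a)) (func f (l.set i b)) :=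
  h.lift (fun c => func f (l.set i c)) fun c d hcd => by
    simpa using ProdStep.inArg (f := f) (List.getElem?_set_self (a := c) hi) hcd

theorem reflTransGen_func_map {f : F} {l : List (Tm F N)} {g : Tm F N → Tm F N}
    (h : ∀ a ∈ l, ReflTransGen (ProdStep pr) a (g a)) :
    ReflTransGen (ProdStep pr) (func f l) (func f (l.map g)) := by
  suffices ∀ pre, ReflTransGen (ProdStep pr) (func f (pre ++ l)) (func f (pre ++ l.map g)) by
    simpa using this []
  induction l with
  | nil => exact fun _ => .refl
  | cons a l ih =>
    intro pre
    have hhead := reflTransGen_func_set (f := f) (l := pre ++ a :: l) (i := pre.length)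
      (by simp) (h a List.mem_cons_self)
    simp only [List.set_append_right _ _ le_rfl, Nat.sub_self, List.set_cons_zero] at hhead
    have htail := ih (fun b hb => h b (List.mem_cons_of_mem a hb)) (pre ++ [g a])
    simp only [List.append_assoc, List.singleton_append] at htail
    simpa using hhead.trans htail

theorem exists_of_reflTransGen_rhs {γ : N} {s u : Tm F N} (h : ProdStep (γ, s) x y)
    (hus : ReflTransGen (ProdStep pr) u s) :
    ∃ c, ProdStep (γ, u) x c ∧ ReflTransGen (ProdStep pr) c y := by
  generalize hpr : (γ, s) = pr' at h
  induction h with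
  | here =>
    cases hpr
    exact ⟨u, .here, hus⟩
  | @inArg pr' f args i a b hi _ ih =>
    obtain ⟨c, hac, hcb⟩ := ih hpr
    have hlt := (List.getElem?_eq_some_iff.1 hi).1
    have hcb' := reflTransGen_func_set (f := f) (l := args.set i c) (by simpa using hlt) hcb
    exact ⟨_, .inArg hi hac, by simpa using hcb'⟩

end ProdStep

theorem Tm.reflTransGen_subst {F N : Type} [DecidableEq N] (β : N) (t u : Tm F N) :
    ReflTransGen (ProdStep (β, t)) u (Tm.subst β t u) := by
  induction u using Tm.rec_mem with
  | nt γ =>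
    by_cases hγ : γ = β
    · subst hγ
      simpa using ReflTransGen.single ProdStep.here
    · simpa [hγ] using ReflTransGen.refl
  | func f l ih => simpa using ProdStep.reflTransGen_func_map ih

def RewriteStep {F N : Type} (P : Set (N × Tm F N)) (a b : Tm F N) : Prop :=
  ∃ pr ∈ P, ProdStep pr a b

theorem exists_prods_of_isChain {F N : Type} {P : Set (N × Tm F N)} {l : List (Tm F N)}
    (hl : l.IsChain (RewriteStep P)) (hne : l ≠ []) :
    ∃ prs : List (N × Tm F N), l.length = prs.length + 1 ∧ (∀ pr ∈ prs, pr ∈ P) ∧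
      ∀ (i : ℕ) (a b : Tm F N) (pr : N × Tm F N),
        l[i]? = some a → l[i + 1]? = some b → prs[i]? = some pr → ProdStep pr a b := by
  induction hl with
  | nil => exact absurd rfl hne
  | singleton a => exact ⟨[], rfl, by simp, by simp⟩
  | @cons_cons a b l hab _ ih =>
    obtain ⟨pr, hpr, hstep⟩ := hab
    obtain ⟨prs, hlen, hmem, hsteps⟩ := ih (List.cons_ne_nil _ _)
    refine ⟨pr :: prs, by simpa using hlen, by simpa [hpr] using hmem, ?_⟩
    rintro (_ | i) a' b' pr' ha hb hpr'
    · simp_all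
    · exact hsteps i a' b' pr' ha hb hpr'

namespace Deriv

open Tm

variable {F N : Type} {G : RTG F N} {t₀ : Tm F N} (D : Deriv G t₀)

theorem seq_ne_nil : D.seq ≠ [] :=
  List.ne_nil_of_length_pos (by simp [D.len])

theorem start_mem : nt G.start ∈ D.seq :=
  List.mem_of_mem_head? D.head

theorem isChain : D.seq.IsChain fun a b => RewriteStep G.prods a b ∧ b ∈ D.seq := by
  refine List.isChain_iff_getElem.2 fun i hi => ⟨?_, List.getElem_mem _⟩
  have hpr : i < D.prs.length := by have := D.len; omega
  exact ⟨_, D.mem _ (List.getElem_mem hpr), D.steps i _ _ _ (by simp) (by simp) (by simp)⟩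

theorem reflTransGen :
    ReflTransGen (fun a b => RewriteStep G.prods a b ∧ b ∈ D.seq) (nt G.start) t₀ := by
  have := List.relationReflTransGen_of_exists_isChain D.seq D.isChain D.seq_ne_nil
  rwa [(List.head_eq_iff_head?_eq_some _).2 D.head,
    (List.getLast_eq_iff_getLast?_eq_some _).2 D.last] at this

theorem backward_induction (motive : Tm F N → Prop) (last : motive t₀)
    (step : ∀ x y, RewriteStep G.prods x y → y ∈ D.seq → motive y → motive x) :
    ∀ s ∈ D.seq, motive s :=
  D.isChain.backwards_induction motive _ (fun x y h => step x y h.1 h.2) fun hne => by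
    rwa [(List.getLast_eq_iff_getLast?_eq_some hne).2 D.last]

theorem exists_of_reflTransGen {Q : Tm F N → Prop}
    (h : ReflTransGen (fun a b => RewriteStep G.prods a b ∧ Q b) (nt G.start) t₀)
    (hstart : Q (nt G.start)) : ∃ D : Deriv G t₀, ∀ s ∈ D.seq, Q s := by
  obtain ⟨l, hl, hlast⟩ := List.exists_isChain_cons_of_relationReflTransGen h
  obtain ⟨prs, hlen, hmem, hsteps⟩ :=
    exists_prods_of_isChain (hl.imp fun _ _ h => h.1) (List.cons_ne_nil _ _)
  refine ⟨⟨prs, _, hlen, rfl, by rw [List.getLast?_eq_some_getLast (List.cons_ne_nil _ _), hlast],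
    hmem, hsteps⟩, ?_⟩
  exact hl.induction Q _ (fun _ _ h _ => h.2) fun _ => hstart

theorem hasFuncAt_of_mem {s : Tm F N} {p : List ℕ} {f : F} {n : ℕ} (hs : s ∈ D.seq)
    (h : s.HasFuncAt p f n) : t₀.HasFuncAt p f n :=
  D.backward_induction (fun x => x.HasFuncAt p f n → t₀.HasFuncAt p f n) id
    (fun _ _ ⟨_, _, hxy⟩ _ hy hx => hy (hxy.hasFuncAt hx)) s hs h

theorem Rigid.at?_eq_at?_of_at?_eq {D : Deriv G t₀} (hD : D.Rigid) {s s' w : Tm F N}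
    (hrig : ∀ γ r, OccursAt γ w r → γ ∈ G.rigid) {p q : List ℕ} (hs : s ∈ D.seq) (hs' : s' ∈ D.seq)
    (hp : s.at? p = some w) (hq : s'.at? q = some w) : t₀.at? p = t₀.at? q :=
  at?_eq_at?_of_hasFuncAt w
    (fun _ _ _ h => D.hasFuncAt_of_mem hs ((hasFuncAt_append_iff hp).2 h))
    (fun _ _ _ h => D.hasFuncAt_of_mem hs' ((hasFuncAt_append_iff hq).2 h))
    (fun _ γ h => hD γ (hrig γ _ h) _ _ ⟨s, hs, (occursAt_append_iff hp).2 h⟩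
      ⟨s', hs', (occursAt_append_iff hq).2 h⟩)

theorem not_occurs_of_isGround {β : N} (hg : t₀.IsGround)
    (hβ : ∀ u, (β, u) ∈ G.prods → Occurs β u) : ∀ s ∈ D.seq, ¬ Occurs β s :=
  D.backward_induction _ hg.not_occurs fun x y ⟨⟨γ, u⟩, hpr, hxy⟩ _ hy ⟨p, hx⟩ => by
    rcases hxy.occursAt_or hx with h | ⟨rfl, hu⟩
    · exact hy ⟨p, h⟩
    · exact hy ((hβ u hpr).of_at?_eq hu)

theorem exists_at?_eq_of_occursAt {β : N} {t : Tm F N} (hg : t₀.IsGround)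
    (huniq : ∀ u, (β, u) ∈ G.prods → u = t) {s : Tm F N} (hs : s ∈ D.seq) {p : List ℕ}
    (h : OccursAt β s p) : ∃ s' ∈ D.seq, s'.at? p = some t :=
  D.backward_induction (fun x => OccursAt β x p → ∃ s' ∈ D.seq, s'.at? p = some t)
    (fun h => absurd ⟨p, h⟩ hg.not_occurs)
    (fun x y ⟨⟨γ, u⟩, hpr, hxy⟩ hy ih hx => by
      rcases hxy.occursAt_or hx with h | ⟨rfl, hu⟩
      · exact ih h
      · exact ⟨y, hy, huniq u hpr ▸ hu⟩)
    s hs h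

theorem isPos_of_occursAt_subst [DecidableEq N] {β γ : N} {t : Tm F N} (hg : t₀.IsGround)
    (huniq : ∀ u, (β, u) ∈ G.prods → u = t) {s : Tm F N} (hs : s ∈ D.seq) {p : List ℕ}
    (h : OccursAt γ (subst β t s) p) : D.IsPos γ p := by
  rcases occursAt_subst_iff.1 h with ⟨-, h⟩ | ⟨p₀, r, rfl, h₀, hr⟩
  · exact ⟨s, hs, h⟩
  · obtain ⟨s', hs', ht⟩ := D.exists_at?_eq_of_occursAt hg huniq hs h₀
    exact ⟨s', hs', (occursAt_append_iff ht).2 hr⟩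

end Deriv

namespace RTG

open Tm

variable {F N : Type} [DecidableEq N]

def inline (G : RTG F N) (β : N) (t : Tm F N) : RTG F N where
  rigid := Set.univ
  start := G.start
  prods := { p | ∃ γ u, (γ, u) ∈ G.prods ∧ (γ, u) ≠ (β, t) ∧ p = (γ, Tm.subst β t u) }

variable (G : RTG F N) {β : N} {t : Tm F N}

theorem subst_eq_or_rewriteStep_inline (huniq : ∀ u, (β, u) ∈ G.prods → u = t) {x y : Tm F N}
    (h : RewriteStep G.prods x y) (hy : ¬ Occurs β t ∨ ¬ Occurs β y) :
    subst β t x = subst β t y ∨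
      RewriteStep (G.inline β t).prods (subst β t x) (subst β t y) := by
  obtain ⟨⟨γ, u⟩, hpr, hxy⟩ := h
  by_cases hγ : γ = β
  · subst hγ
    obtain rfl := huniq u hpr
    refine .inl (hxy.subst_eq_subst fun ht => ?_)
    obtain ⟨p, -, hp⟩ := hxy.exists_occursAt
    exact hy.elim (· ht) (· (ht.of_at?_eq hp))
  · exact .inr ⟨_, ⟨γ, u, hpr, fun h => hγ (congrArg Prod.fst h), rfl⟩, hxy.subst hγ⟩

theorem lang_subset_lang_inline (hrig : G.rigid = Set.univ) (hβ : β ≠ G.start)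
    (huniq : ∀ u, (β, u) ∈ G.prods → u = t) : G.Lang ⊆ (G.inline β t).Lang := by
  rintro t₀ ⟨hg, D, hD⟩
  have hfree (y) (hy : y ∈ D.seq) : ¬ Occurs β t ∨ ¬ Occurs β y :=
    (em' _).imp_right fun ht => D.not_occurs_of_isGround hg (fun u hu => huniq u hu ▸ ht) y hy
  have hchain : ReflTransGen (fun a b => RewriteStep (G.inline β t).prods a b ∧
      ∃ s ∈ D.seq, b = subst β t s) (nt G.start) t₀ := by
    have hstep (x y) (hxy : RewriteStep G.prods x y ∧ y ∈ D.seq) :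
        ReflTransGen (fun a b => RewriteStep (G.inline β t).prods a b ∧
          ∃ s ∈ D.seq, b = subst β t s) (subst β t x) (subst β t y) :=
      (G.subst_eq_or_rewriteStep_inline huniq hxy.1 (hfree y hxy.2)).elim
        (fun h => h ▸ .refl) fun h => .single ⟨h, y, hxy.2, rfl⟩
    have := D.reflTransGen.lift' (subst β t) hstep
    rw [Function.onFun, subst_nt, if_neg hβ.symm, subst_eq_self hg.not_occurs] at this
    exact this
  obtain ⟨D', hD'⟩ := Deriv.exists_of_reflTransGen hchain
    ⟨_, D.start_mem, by rw [subst_nt, if_neg hβ.symm]; rfl⟩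
  have hpos (γ p) : D'.IsPos γ p → D.IsPos γ p := fun ⟨s', hs', h⟩ => by
    obtain ⟨s, hs, rfl⟩ := hD' s' hs'
    exact D.isPos_of_occursAt_subst hg huniq hs h
  exact ⟨hg, D', fun γ _ p q hp hq => hD γ (hrig ▸ trivial) p q (hpos γ p hp) (hpos γ q hq)⟩

theorem reflTransGen_of_prodStep_inline (hmem : (β, t) ∈ G.prods) {γ : N} {u a b : Tm F N}
    (hu : (γ, u) ∈ G.prods) (h : ProdStep (γ, subst β t u) a b) (hb : ¬ Occurs β b) :
    ReflTransGen (fun x y => RewriteStep G.prods x y ∧ subst β t y = b) a b := by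
  by_cases ht : Occurs β t
  · have hu' : ¬ Occurs β u := fun ⟨r, hr⟩ => by
      obtain ⟨p, -, hp⟩ := h.exists_occursAt
      have hr : (subst β t u).at? r = some t := by
        simpa using at?_subst (β := β) (t := t) (occursAt_iff.1 hr)
      exact hb ((ht.of_at?_eq hr).of_at?_eq hp)
    rw [subst_eq_self hu'] at h
    exact .single ⟨⟨_, hu, h⟩, subst_eq_self hb⟩
  · obtain ⟨c, hac, hcb⟩ := h.exists_of_reflTransGen_rhs (reflTransGen_subst β t u)
    obtain ⟨hc, hcb⟩ := hcb.and_of_backward (p := fun y => subst β t y = b)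
      (fun x y hxy hy => (hxy.subst_eq_subst ht).trans hy) (subst_eq_self hb)
    exact .head ⟨⟨_, hu, hac⟩, hc⟩ (ReflTransGen.mono (fun x y h => ⟨⟨_, hmem, h.1⟩, h.2⟩) _ _ hcb)

theorem lang_inline_subset_lang (hmem : (β, t) ∈ G.prods)
    (huniq : ∀ u, (β, u) ∈ G.prods → u = t) : (G.inline β t).Lang ⊆ G.Lang := by
  rintro t₀ ⟨hg, D', hD'⟩
  have hfree : ∀ b ∈ D'.seq, ¬ Occurs β b :=
    D'.not_occurs_of_isGround hg fun u ⟨γ, u', hu', hne, heq⟩ => by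
      obtain ⟨rfl, rfl⟩ := Prod.mk.inj heq
      exact absurd (by rw [huniq u' hu']) hne
  have hchain : ReflTransGen (fun a b => RewriteStep G.prods a b ∧ subst β t b ∈ D'.seq)
      (nt G.start) t₀ :=
    reflTransGen_closed (fun a b ⟨⟨_, ⟨γ, u, hu, _, rfl⟩, hab⟩, hb⟩ =>
      ReflTransGen.mono (fun _ _ h => ⟨h.1, h.2 ▸ hb⟩) _ _
        (G.reflTransGen_of_prodStep_inline hmem hu hab (hfree b hb))) _ _ D'.reflTransGen
  obtain ⟨D, hD⟩ := Deriv.exists_of_reflTransGen hchain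
    (by rw [subst_eq_self (s := nt G.start) (hfree _ D'.start_mem)]; exact D'.start_mem)
  refine ⟨hg, D, fun γ _ p q ⟨s, hs, hp⟩ ⟨s', hs', hq⟩ => ?_⟩
  exact hD'.at?_eq_at?_of_at?_eq (fun _ _ _ => trivial) (hD s hs) (hD s' hs')
    (at?_subst (occursAt_iff.1 hp)) (at?_subst (occursAt_iff.1 hq))

end RTG

/-- eliminating a non-start non-terminal `β` with a unique production `β → t`
    from a totally rigid tree grammar, substituting `t` for `β` in all remaining
    right-hand sides, preserves the language. -/
theorem elim_unique_rigid_nonterminal {F N : Type} [DecidableEq N] (G : RTG F N)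
    (hrig : G.rigid = Set.univ) (β : N) (t : Tm F N) (hβ : β ≠ G.start)
    (hmem : (β, t) ∈ G.prods) (huniq : ∀ s : Tm F N, (β, s) ∈ G.prods → s = t) :
    G.Lang =
      RTG.Lang
        { rigid := Set.univ
          start := G.start
          prods := { p | ∃ γ u, (γ, u) ∈ G.prods ∧ (γ, u) ≠ (β, t) ∧
            p = (γ, Tm.subst β t u) } } :=
  (G.lang_subset_lang_inline hrig hβ huniq).antisymm (G.lang_inline_subset_lang hmem huniq)
end

section
/- For every n ≥ 1 there exists an acyclic regular tree grammar G with 2n production rules such that |L(G)| = n^(n^n). -/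
/-! The non-terminal `k` derives exactly the complete `n`-ary trees of height `k` built from one
`n`-ary symbol `f` and `n` constants: a tree of height `k + 1` is `f` applied to `n` independent
trees of height `k`, so there are `n ^ n ^ k` of them, while the grammar only needs the `2n`
productions `k + 1 → f(k, …, k)` and `0 → cⱼ`. Every right-hand side mentions only a smaller
non-terminal, which makes the grammar acyclic. -/

open Relation

section Terms

variable {F N : Type}

theorem Tm.isGround_func_iff {f : F} {args : List (Tm F N)} :
    (Tm.func f args).IsGround ↔ ∀ a ∈ args, a.IsGround :=
  ⟨fun | .func h => h, .func⟩

theorem Tm.not_isGround_nt (β : N) : ¬ (Tm.nt β : Tm F N).IsGround := nofun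

theorem Tm.occurs_nt_iff {β γ : N} : Tm.Occurs β (Tm.nt γ : Tm F N) ↔ β = γ := by
  constructor
  · rintro ⟨_, h⟩
    cases h
    rfl
  · rintro rfl
    exact ⟨[], .here⟩

theorem Tm.occurs_func_iff {β : N} {f : F} {args : List (Tm F N)} :
    Tm.Occurs β (Tm.func f args) ↔ ∃ a ∈ args, Tm.Occurs β a := by
  constructor
  · rintro ⟨_, hp⟩
    cases hp with
    | there hi ha => exact ⟨_, List.mem_of_getElem? hi, _, ha⟩
  · rintro ⟨a, ha, p, hp⟩
    obtain ⟨i, hi⟩ := List.mem_iff_getElem?.mp ha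
    exact ⟨i :: p, .there hi hp⟩

theorem ProdStep.func_middle {pr : N × Tm F N} {a b : Tm F N} (h : ProdStep pr a b) (f : F)
    (pre post : List (Tm F N)) :
    ProdStep pr (.func f (pre ++ a :: post)) (.func f (pre ++ b :: post)) := by
  simpa using ProdStep.inArg (f := f) (args := pre ++ a :: post) (i := pre.length) (by simp) h

end Terms

theorem List.Forall₂.set_right {α β : Type*} {R : α → β → Prop} {l₁ : List α} {l₂ : List β}
    (h : List.Forall₂ R l₁ l₂) {i : ℕ} {b c : β} (hb : l₂[i]? = some b)
    (hc : ∀ a, R a b → R a c) : List.Forall₂ R l₁ (l₂.set i c) := by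
  induction h generalizing i with
  | nil => simp at hb
  | cons hab hrest ih =>
    cases i with
    | zero =>
      obtain rfl : _ = b := by simpa using hb
      exact .cons (hc _ hab) hrest
    | succ i => exact .cons hab (ih (by simpa using hb))

theorem List.forall₂_replicate_left_iff {α β : Type*} {R : α → β → Prop} {a : α} {n : ℕ}
    {l : List β} : List.Forall₂ R (List.replicate n a) l ↔ l.length = n ∧ ∀ b ∈ l, R a b := by
  induction n generalizing l with
  | zero => simp +contextual
  | succ n ih => cases l <;> simp [List.replicate_succ, ih, and_left_comm]

section Rewriting

variable {F N : Type} {P : Set (N × Tm F N)}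

def Rewrites (P : Set (N × Tm F N)) (a b : Tm F N) : Prop := ∃ pr ∈ P, ProdStep pr a b

theorem Deriv.isChain_s4 {G : RTG F N} {t : Tm F N} (D : Deriv G t) :
    D.seq.IsChain (Rewrites G.prods) := by
  rw [List.isChain_iff_getElem]
  intro i hi
  have hi' : i < D.prs.length := by have := D.len; omega
  exact ⟨D.prs[i], D.mem _ (List.getElem_mem hi'),
    D.steps i _ _ _ (by simp) (by simp) (by simp)⟩

theorem nonempty_deriv_iff {G : RTG F N} {t : Tm F N} :
    Nonempty (Deriv G t) ↔ ReflTransGen (Rewrites G.prods) (.nt G.start) t := by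
  constructor
  · rintro ⟨D⟩
    have hne : D.seq ≠ [] := fun h => by simpa [h] using D.head
    have hhead : D.seq.head hne = .nt G.start := by
      simpa [List.head?_eq_some_head hne] using D.head
    have hlast : D.seq.getLast hne = t := by
      simpa [List.getLast?_eq_some_getLast hne] using D.last
    simpa [hhead, hlast] using List.relationReflTransGen_of_exists_isChain D.seq D.isChain_s4 hne
  · intro h
    obtain ⟨l, hchain, hlast⟩ := List.exists_isChain_cons_of_relationReflTransGen h
    rw [List.isChain_iff_getElem] at hchain
    choose pr hmem hstep using hchain
    refine ⟨⟨List.ofFn fun i : Fin l.length => pr i (by simp), .nt G.start :: l, by simp, rfl,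
      by simpa [List.getLast?_eq_some_getLast] using hlast, ?_, ?_⟩⟩
    · simp only [List.mem_ofFn, forall_exists_index]
      rintro _ i rfl
      exact hmem _ _
    · intro i a b q ha hb hq
      simp only [List.getElem?_ofFn, Option.dite_none_right_eq_some, Option.some.injEq] at hq
      obtain ⟨hi, rfl⟩ := hq
      obtain ⟨-, rfl⟩ := List.getElem?_eq_some_iff.mp ha
      obtain ⟨-, rfl⟩ := List.getElem?_eq_some_iff.mp hb
      exact hstep i _

theorem reflTransGen_func_of_forall₂ (f : F) {as bs : List (Tm F N)}
    (h : List.Forall₂ (ReflTransGen (Rewrites P)) as bs) :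
    ReflTransGen (Rewrites P) (.func f as) (.func f bs) := by
  suffices ∀ pre, ReflTransGen (Rewrites P) (.func f (pre ++ as)) (.func f (pre ++ bs)) by
    simpa using this []
  induction h with
  | nil => exact fun _ => .refl
  | @cons a b as bs hab _ ih =>
    intro pre
    have hhead :
        ReflTransGen (Rewrites P) (.func f (pre ++ a :: as)) (.func f (pre ++ b :: as)) :=
      ReflTransGen.lift (p := Rewrites P) (fun x => .func f (pre ++ x :: as))
        (fun _ _ ⟨pr, hpr, hs⟩ => ⟨pr, hpr, hs.func_middle f pre as⟩) _ _ hab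
    exact hhead.trans (by simpa using ih (pre ++ [b]))

theorem reflTransGen_func_iff {f : F} {as : List (Tm F N)} {t : Tm F N} :
    ReflTransGen (Rewrites P) (.func f as) t ↔
      ∃ bs, t = .func f bs ∧ List.Forall₂ (ReflTransGen (Rewrites P)) as bs := by
  refine ⟨fun h => ?_, fun ⟨bs, ht, hbs⟩ => ht ▸ reflTransGen_func_of_forall₂ f hbs⟩
  induction h with
  | refl => exact ⟨as, rfl, List.forall₂_same.mpr fun _ _ => .refl⟩
  | tail _ hstep ih =>
    obtain ⟨bs, rfl, hbs⟩ := ih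
    obtain ⟨pr, hpr, hstep⟩ := hstep
    cases hstep with
    | inArg hb hs => exact ⟨_, rfl, hbs.set_right hb fun _ h => h.tail ⟨pr, hpr, hs⟩⟩

theorem reflTransGen_nt_iff_of_isGround {β : N} {t : Tm F N} (ht : t.IsGround) :
    ReflTransGen (Rewrites P) (.nt β) t ↔ ∃ u, (β, u) ∈ P ∧ ReflTransGen (Rewrites P) u t := by
  constructor
  · intro h
    rcases h.cases_head with rfl | ⟨u, ⟨pr, hpr, hstep⟩, hu⟩
    · exact absurd ht (Tm.not_isGround_nt β)
    · cases hstep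
      exact ⟨u, hpr, hu⟩
  · rintro ⟨u, hu, h⟩
    exact .head ⟨_, hu, .here⟩ h

theorem acyclic_of_reach_lt [Preorder N] (h : ∀ α β, Reach P α β → β < α) : Acyclic P := by
  intro α hα
  have : TransGen (· > ·) α α := TransGen.mono h α α hα
  rw [transGen_eq_self] at this
  exact lt_irrefl α this

end Rewriting

/-! The hint's `αᵢ` is the non-terminal `n - i` here; `f` is the symbol `0` and `c₁, …, cₙ` are
the symbols `1, …, n`. -/
namespace TowerGrammar

def branch (n k : ℕ) : Tm ℕ ℕ := .func 0 (List.replicate n (.nt k))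

def leaf (j : ℕ) : Tm ℕ ℕ := .func (j + 1) []

theorem leaf_injective : Function.Injective leaf := fun _ _ h => by simpa [leaf] using h

def prods (n : ℕ) : Set (ℕ × Tm ℕ ℕ) :=
  (fun k => (k + 1, branch n k)) '' Set.Iio n ∪ (fun j => (0, leaf j)) '' Set.Iio n

def grammar (n : ℕ) : RTG ℕ ℕ := ⟨∅, n, prods n⟩

theorem succ_mem_prods_iff {n k : ℕ} {u : Tm ℕ ℕ} :
    (k + 1, u) ∈ prods n ↔ k < n ∧ u = branch n k := by
  simp [prods, eq_comm]

theorem zero_mem_prods_iff {n : ℕ} {u : Tm ℕ ℕ} : (0, u) ∈ prods n ↔ ∃ j < n, u = leaf j := by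
  simp [prods, eq_comm]

theorem finite_prods (n : ℕ) : (prods n).Finite :=
  ((Set.finite_Iio n).image _).union ((Set.finite_Iio n).image _)

theorem ncard_prods (n : ℕ) : (prods n).ncard = 2 * n := by
  rw [prods, Set.ncard_union_eq, Set.ncard_image_of_injective, Set.ncard_image_of_injective,
    Set.ncard_Iio_nat, two_mul]
  · exact fun _ _ h => leaf_injective (Prod.ext_iff.mp h).2
  · exact fun _ _ h => by simpa using (Prod.ext_iff.mp h).1
  · rw [Set.disjoint_left]
    rintro _ ⟨k, -, rfl⟩ ⟨j, -, h⟩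
    simp at h

theorem reach_prods_lt {n α β : ℕ} (h : Reach (prods n) α β) : β < α := by
  obtain ⟨u, hu, hocc⟩ := h
  rcases hu with ⟨k, -, hk⟩ | ⟨j, -, hj⟩
  · simp only [Prod.mk.injEq] at hk
    obtain ⟨rfl, rfl⟩ := hk
    obtain ⟨a, ha, hβ⟩ := Tm.occurs_func_iff.mp hocc
    rw [List.eq_of_mem_replicate ha, Tm.occurs_nt_iff] at hβ
    omega
  · obtain ⟨-, rfl⟩ := Prod.ext_iff.mp hj
    simp [leaf, Tm.occurs_func_iff] at hocc

theorem acyclic_prods (n : ℕ) : Acyclic (prods n) :=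
  acyclic_of_reach_lt fun _ _ => reach_prods_lt

def completeTrees (n : ℕ) : ℕ → Finset (Tm ℕ ℕ)
  | 0 => (Finset.range n).map ⟨leaf, leaf_injective⟩
  | k + 1 => (Fintype.piFinset fun _ : Fin n => completeTrees n k).map
      ⟨fun g => .func 0 (List.ofFn g), fun _ _ h => by simpa using h⟩

theorem card_completeTrees (n k : ℕ) : (completeTrees n k).card = n ^ n ^ k := by
  induction k with
  | zero => simp [completeTrees]
  | succ k ih => simp [completeTrees, ih, pow_succ, pow_mul]

theorem mem_completeTrees_zero {n : ℕ} {t : Tm ℕ ℕ} :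
    t ∈ completeTrees n 0 ↔ ∃ j < n, t = leaf j := by
  simp [completeTrees, eq_comm]

theorem mem_completeTrees_succ {n k : ℕ} {t : Tm ℕ ℕ} : t ∈ completeTrees n (k + 1) ↔
    ∃ ts : List (Tm ℕ ℕ), t = .func 0 ts ∧ ts.length = n ∧ ∀ a ∈ ts, a ∈ completeTrees n k := by
  simp only [completeTrees, Finset.mem_map, Fintype.mem_piFinset]
  constructor
  · rintro ⟨g, hg, rfl⟩
    exact ⟨_, rfl, by simp, by simpa [List.mem_ofFn] using hg⟩
  · rintro ⟨ts, rfl, rfl, hts⟩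
    exact ⟨fun i => ts[i], fun i => hts _ (List.getElem_mem _),
      congrArg (Tm.func 0) List.ofFn_getElem⟩

theorem isGround_and_reflTransGen_iff {n k : ℕ} (hk : k ≤ n) {t : Tm ℕ ℕ} :
    t.IsGround ∧ ReflTransGen (Rewrites (prods n)) (.nt k) t ↔ t ∈ completeTrees n k := by
  induction k generalizing t with
  | zero =>
    rw [mem_completeTrees_zero]
    constructor
    · rintro ⟨ht, h⟩
      obtain ⟨u, hu, hut⟩ := (reflTransGen_nt_iff_of_isGround ht).mp h
      obtain ⟨j, hj, rfl⟩ := zero_mem_prods_iff.mp hu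
      obtain ⟨bs, rfl, hbs⟩ := reflTransGen_func_iff.mp hut
      exact ⟨j, hj, by rw [List.forall₂_nil_left_iff.mp hbs, leaf]⟩
    · rintro ⟨j, hj, rfl⟩
      exact ⟨Tm.isGround_func_iff.mpr (by simp),
        .single ⟨_, zero_mem_prods_iff.mpr ⟨j, hj, rfl⟩, .here⟩⟩
  | succ k ih =>
    have ih' := fun {t} => @ih (by omega) t
    rw [mem_completeTrees_succ]
    constructor
    · rintro ⟨ht, h⟩
      obtain ⟨u, hu, hut⟩ := (reflTransGen_nt_iff_of_isGround ht).mp h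
      obtain ⟨-, rfl⟩ := succ_mem_prods_iff.mp hu
      obtain ⟨ts, rfl, hts⟩ := reflTransGen_func_iff.mp hut
      rw [List.forall₂_replicate_left_iff] at hts
      exact ⟨ts, rfl, hts.1, fun a ha => ih'.mp ⟨Tm.isGround_func_iff.mp ht a ha, hts.2 a ha⟩⟩
    · rintro ⟨ts, rfl, hlen, hts⟩
      refine ⟨Tm.isGround_func_iff.mpr fun a ha => (ih'.mpr (hts a ha)).1,
        .head ⟨_, succ_mem_prods_iff.mpr ⟨hk, rfl⟩, .here⟩ ?_⟩
      exact reflTransGen_func_iff.mpr ⟨ts, rfl, List.forall₂_replicate_left_iff.mpr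
        ⟨hlen, fun a ha => (ih'.mpr (hts a ha)).2⟩⟩

theorem regLang_grammar (n : ℕ) : (grammar n).RegLang = completeTrees n n := by
  ext t
  exact (and_congr_right' nonempty_deriv_iff).trans (isGround_and_reflTransGen_iff le_rfl)

end TowerGrammar

theorem exists_acyclic_regular_grammar_large_language_general (n : ℕ) :
    ∃ G : RTG ℕ ℕ, G.prods.Finite ∧ G.prods.ncard = 2 * n ∧ Acyclic G.prods ∧
      G.RegLang.Finite ∧ G.RegLang.ncard = n ^ (n ^ n) := by
  refine ⟨TowerGrammar.grammar n, TowerGrammar.finite_prods n, TowerGrammar.ncard_prods n,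
    TowerGrammar.acyclic_prods n, ?_, ?_⟩ <;> rw [TowerGrammar.regLang_grammar]
  · exact Finset.finite_toSet _
  · rw [Set.ncard_coe_finset, TowerGrammar.card_completeTrees]

/-- for every n ≥ 1 there is an acyclic regular tree grammar with 2n
    productions whose language has cardinality n^(n^n). -/
theorem exists_acyclic_regular_grammar_large_language (n : ℕ) (hn : 1 ≤ n) :
    ∃ G : RTG ℕ ℕ, G.prods.Finite ∧ G.prods.ncard = 2 * n ∧ Acyclic G.prods ∧
      G.RegLang.Finite ∧ G.RegLang.ncard = n ^ (n ^ n) :=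
  exists_acyclic_regular_grammar_large_language_general n
end
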